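/- Let 0 ≤ l ≤ e−1 and, for i = 1,2,3,4, let G_i be a k_i × n matrix over F_q of rank k_i whose rows form a basis of an F_q-linear code C_i ⊆ F_q^n, and let C = γ_1C_1 ⊕ γ_2C_2 ⊕ γ_3C_3 ⊕ γ_4C_4 ⊆ R^n. Then C is an l-Galois LCD code over R if and only if, for each i = 1,2,3,4, the k_i × k_i matrix G_i(F^{e−l}(G_i))^T is nonsingular over F_q. -/

import Mathlib

open scoped BigOperators

/-- The ring `R = F_q + uF_q + vF_q + uvF_q ≅ F_q^4` (componentwise operations). -/
abbrev RR (F : Type*) := Fin 4 → F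

/-- The pairwise orthogonal idempotents `γ_1, γ_2, γ_3, γ_4` of `R`,
realized as the standard idempotents of `F_q^4`. -/
def gam (F : Type*) [Field F] (i : Fin 4) : RR F := Pi.single i 1

/-- The `i`-th component code `C_i ⊆ F_q^n` of a code `C ⊆ R^n`. -/
def compCode {F : Type*} [Field F] {n : ℕ} (C : Set (Fin n → RR F)) (i : Fin 4) :
    Set (Fin n → F) :=
  {x | ∃ c ∈ C, ∀ j, c j i = x j}

/-- Euclidean dual of a code over `R`. -/
def euclDualR {F : Type*} [Field F] {n : ℕ} (C : Set (Fin n → RR F)) :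
    Set (Fin n → RR F) :=
  {s | ∀ t ∈ C, ∑ j, t j * s j = 0}

/-- `l`-Galois dual of a code over `R`; apply with `pl = p ^ l`
(the `l`-Galois inner product is `[t,s]_l = ∑ j, t j * (s j) ^ (p ^ l)`,
since `F^l(r) = r ^ (p ^ l)`). -/
def galDualR {F : Type*} [Field F] {n : ℕ} (pl : ℕ) (C : Set (Fin n → RR F)) :
    Set (Fin n → RR F) :=
  {s | ∀ t ∈ C, ∑ j, t j * s j ^ pl = 0}

/-- `l`-Galois dual of a code over the field `F = F_q`; apply with `pl = p ^ l`. -/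
def galDualF {F : Type*} [Field F] {ι : Type*} [Fintype ι] (pl : ℕ) (D : Set (ι → F)) :
    Set (ι → F) :=
  {x | ∀ c ∈ D, ∑ j, c j * x j ^ pl = 0}

/-- Lee weight of a vector over `R`: the sum of the Hamming weights of the
quadruples of `γ`-components of the coordinates. -/
def leeWt {F : Type*} [Field F] [DecidableEq F] {n : ℕ} (c : Fin n → RR F) : ℕ :=
  ∑ j, hammingNorm (c j)

/-- Minimum Lee distance of a code over `R`. -/
noncomputable def dLee {F : Type*} [Field F] [DecidableEq F] {n : ℕ} (C : Set (Fin n → RR F)) : ℕ :=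
  sInf (leeWt '' {c ∈ C | c ≠ 0})

/-- Minimum Hamming distance of a code over `F_q`. -/
noncomputable def dHam {F : Type*} [Field F] [DecidableEq F] {ι : Type*} [Fintype ι]
    (D : Set (ι → F)) : ℕ :=
  sInf (hammingNorm '' {x ∈ D | x ≠ 0})

/-- The Gray map `ρ : R^n → F_q^{4n}`. -/
def gray {F : Type*} [Field F] {n : ℕ} (c : Fin n → RR F) : Fin n × Fin 4 → F :=
  fun ji => c ji.1 ji.2

/-- The code `C^α = {(α_1 c_1, …, α_n c_n) : c ∈ C}` over `R`. -/
def scaleCode {F : Type*} [Field F] {n : ℕ} (α : Fin n → RR F)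
    (C : Set (Fin n → RR F)) : Set (Fin n → RR F) :=
  (fun c => fun j => α j * c j) '' C

/-- The code `C^a = {(a_1 c_1, …, a_n c_n) : c ∈ C}` over `F_q`. -/
def scaleCodeF {F : Type*} [Field F] {n : ℕ} (a : Fin n → F)
    (D : Set (Fin n → F)) : Set (Fin n → F) :=
  (fun c => fun j => a j * c j) '' D

/-- `P_S`: the submatrix of `P` obtained by deleting the rows and columns
indexed by `S` (its determinant is `1` when `S` is everything, since the
empty matrix has determinant `1`). -/
def minorOff {F : Type*} [Field F] {m : ℕ} (P : Matrix (Fin m) (Fin m) F)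
    (S : Finset (Fin m)) : Matrix {i : Fin m // i ∉ S} {i : Fin m // i ∉ S} F :=
  P.submatrix (fun a => (a : Fin m)) (fun a => (a : Fin m))

/-!
Since `R ≅ F_q^4` componentwise, a vector lies in `C` (resp. in `C^{⊥_l}`) iff each of its
`γ_i`-components lies in `C_i` (resp. in the `l`-Galois dual of `C_i`), so `C` is `l`-Galois LCD
iff every `C_i` is. For `C_i` spanned by the independent rows of `G_i`, raising the dual condition
`∑_j G_i[r,j] x_j^{p^l} = 0` to the power `p^{e-l}`, an injective ring endomorphism inverting
`x ↦ x^{p^l}`, turns it into `F^{e-l}(G_i) x = 0`. Writing `x = y G_i`, the code `C_i` is LCD iff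
`F^{e-l}(G_i) G_iᵀ`, the transpose of `G_i F^{e-l}(G_i)ᵀ`, has trivial kernel.
-/

open Matrix

section FiniteField

variable {F : Type*} [Field F] [Fintype F] {p e l : ℕ}

theorem pow_pow_pow_sub_eq_self (hcard : Fintype.card F = p ^ e) (hl : l ≤ e) (x : F) :
    (x ^ p ^ l) ^ p ^ (e - l) = x := by
  rw [← pow_mul, ← pow_add, Nat.add_sub_cancel' hl, ← hcard, FiniteField.pow_card]

theorem sum_mul_pow_eq_zero_iff {ι : Type*} [Fintype ι] (hp : p.Prime)
    (hcard : Fintype.card F = p ^ e) (hl : l ≤ e) (a x : ι → F) :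
    ∑ j, a j * x j ^ p ^ l = 0 ↔ ∑ j, a j ^ p ^ (e - l) * x j = 0 := by
  have := Fact.mk hp
  have := charP_of_card_eq_prime_pow (R := F) hcard
  rw [← map_eq_zero (iterateFrobenius F p (e - l)), map_sum]
  simp only [map_mul, iterateFrobenius_def, pow_pow_pow_sub_eq_self hcard hl]

end FiniteField

def IsGalLCDF {F ι : Type*} [Field F] [Fintype ι] (pl : ℕ) (D : Set (ι → F)) : Prop :=
  ∀ x ∈ D, x ∈ galDualF pl D → x = 0

theorem mem_galDualF_span_iff {F ι κ : Type*} [Field F] [Fintype ι] (pl : ℕ) (v : κ → ι → F)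
    (x : ι → F) :
    x ∈ galDualF pl (Submodule.span F (Set.range v) : Set (ι → F)) ↔
      ∀ r, ∑ j, v r j * x j ^ pl = 0 := by
  have key := Submodule.span_le (s := Set.range v)
    (p := LinearMap.ker ((dotProductBilin F F).flip fun j => x j ^ pl))
  simpa [SetLike.le_def, Set.range_subset_iff, dotProduct, galDualF] using key

theorem isGalLCDF_span_rows_iff_det_ne_zero {F κ ι : Type*} [Field F] [Fintype F] {p e l : ℕ}
    [Fintype κ] [DecidableEq κ] [Fintype ι] (hp : p.Prime) (hcard : Fintype.card F = p ^ e)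
    (hl : l ≤ e) (G : Matrix κ ι F) (hG : LinearIndependent F G.row) :
    IsGalLCDF (p ^ l) (Submodule.span F (Set.range G.row) : Set (ι → F)) ↔
      (G * (G.map fun x => x ^ p ^ (e - l))ᵀ).det ≠ 0 := by
  set H := G.map fun x => x ^ p ^ (e - l)
  have mem_dual : ∀ x, x ∈ galDualF (p ^ l) (Submodule.span F (Set.range G.row) : Set (ι → F)) ↔
      H *ᵥ x = 0 := fun x => by
    rw [mem_galDualF_span_iff, funext_iff]
    exact forall_congr' fun r => sum_mul_pow_eq_zero_iff hp hcard hl (G r) x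
  have mem_span : ∀ x, x ∈ Submodule.span F (Set.range G.row) ↔ ∃ y, y ᵥ* G = x := fun x => by
    rw [← range_vecMulLinear, LinearMap.mem_range, coe_vecMulLinear]
  have mulVec_transpose_eq_zero : ∀ y, Gᵀ *ᵥ y = 0 ↔ y = 0 := fun y => by
    rw [mulVec_transpose]
    exact (vecMul_injective_iff.mpr hG).eq_iff' (zero_vecMul G)
  calc IsGalLCDF (p ^ l) (Submodule.span F (Set.range G.row) : Set (ι → F))
      ↔ ∀ y, (H * Gᵀ) *ᵥ y = 0 → y = 0 := by
        simp only [IsGalLCDF, SetLike.mem_coe, mem_span, mem_dual, forall_exists_index, forall_apply_eq_imp_iff,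
          ← mulVec_transpose, mulVec_mulVec, mulVec_transpose_eq_zero]
    _ ↔ (H * Gᵀ).det ≠ 0 := by
        rw [Ne, ← exists_mulVec_eq_zero_iff]
        push Not
        exact forall_congr' fun _ => not_imp_not.symm
    _ ↔ (G * Hᵀ).det ≠ 0 := by rw [← det_transpose, transpose_mul, transpose_transpose]

section Components

variable {F : Type*} [Field F] {n : ℕ}

theorem mem_galDualR_iff (pl : ℕ) (C : Set (Fin n → RR F)) (s : Fin n → RR F) :
    s ∈ galDualR pl C ↔ ∀ i, (fun j => s j i) ∈ galDualF pl (compCode C i) := by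
  constructor
  · rintro hs i x ⟨t, ht, htx⟩
    obtain rfl : (fun j => t j i) = x := funext htx
    simpa [Finset.sum_apply] using congr_fun (hs t ht) i
  · intro hs t ht
    funext i
    simpa [Finset.sum_apply] using hs i _ ⟨t, ht, fun _ => rfl⟩

theorem single_mem_of_mem_compCode (C : Submodule (RR F) (Fin n → RR F)) {i : Fin 4}
    {x : Fin n → F} (hx : x ∈ compCode (C : Set (Fin n → RR F)) i) :
    (fun j => Pi.single i (x j)) ∈ C := by
  obtain ⟨t, ht, htx⟩ := hx
  convert C.smul_mem (gam F i) ht using 1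
  funext j i'
  rcases eq_or_ne i' i with rfl | h
  · simp [gam, htx]
  · simp [gam, h]

theorem inter_galDualR_eq_singleton_zero_iff (C : Submodule (RR F) (Fin n → RR F)) {pl : ℕ}
    (hpl : pl ≠ 0) :
    (C : Set (Fin n → RR F)) ∩ galDualR pl (C : Set (Fin n → RR F)) = {0} ↔
      ∀ i, IsGalLCDF pl (compCode (C : Set (Fin n → RR F)) i) := by
  have zero_mem_galDualR : (0 : Fin n → RR F) ∈ galDualR pl (C : Set (Fin n → RR F)) := by
    simp [galDualR, zero_pow hpl]
  rw [Set.eq_singleton_iff_unique_mem]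
  constructor
  · rintro ⟨-, huniq⟩ i x hx hxd
    have hc := huniq _ ⟨single_mem_of_mem_compCode C hx, (mem_galDualR_iff _ _ _).2 fun i' => ?_⟩
    · funext j
      simpa using congr_fun (congr_fun hc j) i
    rcases eq_or_ne i' i with rfl | h
    · simpa using hxd
    · simp [galDualF, h, zero_pow hpl]
  · intro h
    refine ⟨⟨C.zero_mem, zero_mem_galDualR⟩, fun c ⟨hcC, hcD⟩ => funext fun j => funext fun i => ?_⟩
    exact congr_fun (h i _ ⟨c, hcC, fun _ => rfl⟩ ((mem_galDualR_iff _ _ _).1 hcD i)) j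

end Components

open Matrix in
theorem statement8_general {p e l n : ℕ} (hp : p.Prime) (hl : l < e)
    (F : Type*) [Field F] [Fintype F] (hcard : Fintype.card F = p ^ e)
    (k : Fin 4 → ℕ) (G : ∀ i, Matrix (Fin (k i)) (Fin n) F)
    (hGli : ∀ i, LinearIndependent F (fun r : Fin (k i) => G i r))
    (C : Submodule (RR F) (Fin n → RR F))
    (hC : ∀ i, compCode (C : Set (Fin n → RR F)) i =
      (Submodule.span F (Set.range (fun r : Fin (k i) => G i r)) : Set (Fin n → F))) :
    (C : Set (Fin n → RR F)) ∩ galDualR (p ^ l) (C : Set (Fin n → RR F)) = {0} ↔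
      ∀ i, (G i * ((G i).map (fun x => x ^ p ^ (e - l)))ᵀ).det ≠ 0 := by
  rw [inter_galDualR_eq_singleton_zero_iff C (pow_ne_zero l hp.ne_zero)]
  refine forall_congr' fun i => ?_
  rw [hC i]
  exact isGalLCDF_span_rows_iff_det_ne_zero hp hcard hl.le (G i) (hGli i)

open Matrix in
/-- `C = γ_1C_1 ⊕ γ_2C_2 ⊕ γ_3C_3 ⊕ γ_4C_4` is `l`-Galois LCD over `R`
iff each `G_i (F^{e−l}(G_i))^T` is nonsingular over `F_q`. -/
theorem statement8 {p e l n : ℕ} (hp : p.Prime) (he : 0 < e) (hl : l < e)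
    (F : Type*) [Field F] [Fintype F] (hcard : Fintype.card F = p ^ e)
    (k : Fin 4 → ℕ) (G : ∀ i, Matrix (Fin (k i)) (Fin n) F)
    (hGli : ∀ i, LinearIndependent F (fun r : Fin (k i) => G i r))
    (C : Submodule (RR F) (Fin n → RR F))
    (hC : ∀ i, compCode (C : Set (Fin n → RR F)) i =
      (Submodule.span F (Set.range (fun r : Fin (k i) => G i r)) : Set (Fin n → F))) :
    (C : Set (Fin n → RR F)) ∩ galDualR (p ^ l) (C : Set (Fin n → RR F)) = {0} ↔
      ∀ i, (G i * ((G i).map (fun x => x ^ p ^ (e - l)))ᵀ).det ≠ 0 :=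
  statement8_general hp hl F hcard k G hGli C hC
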